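/- arXiv:1206.3898 — 2 statements merged into one kernel-verified Lean document; each statement's English description precedes it below -/
import Mathlib

section
/- Let s > 1/2 and 0 < δ, ε < 1. Then there exist f, g ∈ L²(T) with ‖f‖_{L²} + ‖g‖_{L²} ≤ 2 and ‖f − g‖_{L²} ≤ δ, but sup_{t∈[0,ε]} ‖R[f](t) − R[g](t)‖_{L²} ≥ 1. In particular, the map f ↦ R[f] from L²(T) to L^∞([0,ε]; L²(T)) is not uniformly continuous on bounded sets. -/
noncomputable def jap (x : ℝ) : ℝ := 1 + |x|

noncomputable def Hnorm (σ : ℝ) (a : ℤ → ℂ) : ℝ :=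
  Real.sqrt (∑' ξ : ℤ, jap (ξ : ℝ) ^ (2 * σ) * ‖a ξ‖ ^ 2)

noncomputable def Rop (s : ℝ) (f : ℤ → ℂ) (t : ℝ) (ξ : ℤ) : ℂ :=
  if ξ = 0 then 0
  else f ξ * Complex.exp (2 * Complex.I * ((jap (ξ : ℝ) ^ (2 * s) / (ξ : ℝ)) *
      ‖f ξ‖ ^ 2 * t : ℝ)) * Complex.exp (Complex.I * ((ξ : ℝ) ^ 3 * t : ℝ))

/-!
Take a single Fourier mode `f = e_{ξ₀}` and its rescaling `g = (1 - δ) e_{ξ₀}`. The resonant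
operator rotates the mode `ξ₀` with speed `2κ|a|²`, where `κ = ⟨ξ₀⟩^{2s}/ξ₀`, so the two phases
drift apart at rate `2κ(1 - (1 - δ)²) = 2κδ(2 - δ)`. Since `2s > 1`, `κ ≥ ⟨ξ₀⟩^{2s-1}` is as large as
we like, so the phases are opposite at some time `t ≤ ε`, where the difference has norm
`1 + (1 - δ) ≥ 1`.
-/

open Filter Complex

lemma jap_pos (x : ℝ) : 0 < jap x := by unfold jap; positivity

lemma Hnorm_single (σ : ℝ) (ξ₀ : ℤ) (c : ℂ) :
    Hnorm σ (Pi.single ξ₀ c) = jap ξ₀ ^ σ * ‖c‖ := by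
  have hj := (jap_pos ξ₀).le
  rw [Hnorm, tsum_eq_single ξ₀ fun ξ hξ => by simp [hξ], Pi.single_eq_same,
    mul_comm 2 σ, Real.rpow_mul hj, Real.rpow_two, ← mul_pow,
    Real.sqrt_sq (by positivity)]

lemma Hnorm_zero_single (ξ₀ : ℤ) (c : ℂ) : Hnorm 0 (Pi.single ξ₀ c) = ‖c‖ := by
  rw [Hnorm_single, Real.rpow_zero, one_mul]

lemma Hnorm_zero_single_sub_single (ξ₀ : ℤ) (a b : ℂ) :
    Hnorm 0 (fun ξ => (Pi.single ξ₀ a : ℤ → ℂ) ξ - (Pi.single ξ₀ b : ℤ → ℂ) ξ) = ‖a - b‖ := by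
  rw [← Hnorm_zero_single ξ₀, Pi.single_sub]
  rfl

noncomputable def resonantCoeff (s x : ℝ) : ℝ := jap x ^ (2 * s) / x

lemma le_resonantCoeff {s x : ℝ} (hx : 0 < x) : (1 + x) ^ (2 * s - 1) ≤ resonantCoeff s x := by
  have h1x : 0 < 1 + x := by linarith
  rw [resonantCoeff, jap, abs_of_pos hx, le_div_iff₀ hx, Real.rpow_sub h1x, Real.rpow_one,
    div_mul_eq_mul_div, div_le_iff₀ h1x]
  gcongr
  linarith

lemma tendsto_resonantCoeff_atTop {s : ℝ} (hs : 1 / 2 < s) :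
    Tendsto (resonantCoeff s) atTop atTop := by
  have hgrowth : Tendsto (fun x : ℝ => (1 + x) ^ (2 * s - 1)) atTop atTop :=
    (tendsto_rpow_atTop (by linarith)).comp (tendsto_atTop_add_const_left _ 1 tendsto_id)
  exact tendsto_atTop_mono' _ ((eventually_gt_atTop 0).mono fun x hx => le_resonantCoeff hx) hgrowth

lemma Rop_single (s t : ℝ) {ξ₀ : ℤ} (hξ₀ : ξ₀ ≠ 0) (c : ℂ) :
    Rop s (Pi.single ξ₀ c) t = Pi.single ξ₀
      (c * exp ((2 * resonantCoeff s ξ₀ * ‖c‖ ^ 2 * t : ℝ) * I) *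
        exp (((ξ₀ : ℝ) ^ 3 * t : ℝ) * I)) := by
  ext ξ
  by_cases h : ξ = ξ₀
  · subst h
    simp only [Rop, if_neg hξ₀, Pi.single_eq_same, resonantCoeff]
    push_cast
    ring_nf
  · simp [Rop, h]

lemma norm_exp_mul_I_sub_mul_exp_mul_I {θ φ : ℝ} (h : θ = φ + Real.pi) (r : ℝ) :
    ‖exp (θ * I) - r * exp (φ * I)‖ = |1 + r| := by
  have : exp (θ * I) = -exp (φ * I) := by
    rw [h, ofReal_add, add_mul, exp_add, exp_pi_mul_I, mul_neg_one]
  rw [this, show -exp (φ * I) - r * exp (φ * I) = -(((1 + r : ℝ) : ℂ) * exp (φ * I)) by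
    push_cast; ring, norm_neg, norm_mul, norm_exp_ofReal_mul_I, mul_one, norm_real, Real.norm_eq_abs]

theorem resonant_operator_not_uniformly_continuous_general
    (s δ ε : ℝ) (hs : 1 / 2 < s) (hδ : 0 < δ) (hδ1 : δ < 1)
    (hε : 0 < ε) :
    ∃ f g : ℤ → ℂ, f 0 = 0 ∧ g 0 = 0 ∧
      Hnorm 0 f + Hnorm 0 g ≤ 2 ∧
      Hnorm 0 (fun ξ => f ξ - g ξ) ≤ δ ∧
      ∃ t ∈ Set.Icc (0 : ℝ) ε,
        Hnorm 0 (fun ξ => Rop s f t ξ - Rop s g t ξ) ≥ 1 := by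
  have hgap : 0 < 2 * δ * (2 - δ) := by nlinarith
  obtain ⟨ξ₀, hκ, hξ₀⟩ := (((tendsto_resonantCoeff_atTop hs).comp tendsto_intCast_atTop_atTop
    ).eventually_ge_atTop (Real.pi / (2 * δ * (2 - δ) * ε))).and (eventually_gt_atTop 0) |>.exists
  set κ := resonantCoeff s ξ₀
  rw [Function.comp_apply, div_le_iff₀ (mul_pos hgap hε)] at hκ
  have hκgap : 0 < κ * (2 * δ * (2 - δ)) := by nlinarith [Real.pi_pos]
  set t := Real.pi / (κ * (2 * δ * (2 - δ)))
  have hκt : κ * (2 * δ * (2 - δ)) * t = Real.pi := mul_div_cancel₀ _ hκgap.ne'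
  have ht : t ∈ Set.Icc 0 ε :=
    ⟨div_nonneg Real.pi_pos.le hκgap.le, (div_le_iff₀ hκgap).2 (by linarith)⟩
  have hphase : 2 * κ * ‖(1 : ℂ)‖ ^ 2 * t = 2 * κ * ‖((1 - δ : ℝ) : ℂ)‖ ^ 2 * t + Real.pi := by
    rw [norm_one, norm_real, Real.norm_eq_abs, sq_abs]
    linear_combination hκt
  refine ⟨Pi.single ξ₀ 1, Pi.single ξ₀ ((1 - δ : ℝ) : ℂ), Pi.single_eq_of_ne hξ₀.ne _,
    Pi.single_eq_of_ne hξ₀.ne _, ?_, ?_, t, ht, ?_⟩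
  · rw [Hnorm_zero_single, Hnorm_zero_single, norm_one, norm_real, Real.norm_eq_abs,
      abs_of_pos (by linarith)]
    linarith
  · rw [Hnorm_zero_single_sub_single, ← ofReal_one, ← ofReal_sub, norm_real, Real.norm_eq_abs,
      abs_of_pos (by linarith)]
    linarith
  · rw [Rop_single _ _ hξ₀.ne', Rop_single _ _ hξ₀.ne', Hnorm_zero_single_sub_single, ← sub_mul,
      one_mul, norm_mul, norm_exp_ofReal_mul_I, mul_one, norm_exp_mul_I_sub_mul_exp_mul_I hphase,
      abs_of_pos (by linarith)]
    linarith

theorem resonant_operator_not_uniformly_continuous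
    (s δ ε : ℝ) (hs : 1 / 2 < s) (hδ : 0 < δ) (hδ1 : δ < 1)
    (hε : 0 < ε) (hε1 : ε < 1) :
    ∃ f g : ℤ → ℂ, f 0 = 0 ∧ g 0 = 0 ∧
      Hnorm 0 f + Hnorm 0 g ≤ 2 ∧
      Hnorm 0 (fun ξ => f ξ - g ξ) ≤ δ ∧
      ∃ t ∈ Set.Icc (0 : ℝ) ε,
        Hnorm 0 (fun ξ => Rop s f t ξ - Rop s g t ξ) ≥ 1 :=
  resonant_operator_not_uniformly_continuous_general s δ ε hs hδ hδ1 hε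
end

section
/- Let 0 ≤ s < 1/2 and 0 < δ with 10δ < 1 − 2s, and let 0 < γ < 1 − 10δ. Then there is a constant C such that for all nonzero integers ξ, ξ₁, ξ₂, ξ₃ with ξ₁+ξ₂+ξ₃ = ξ and (ξ₁+ξ₂)(ξ₂+ξ₃)(ξ₃+ξ₁) ≠ 0: ⟨ξ₂⟩^{s+δ} ⟨ξ⟩^{γ−s} / (⟨ξ₁⟩^{γ−s−δ} ⟨ξ₃⟩^{1−s−δ} (|ξ₁+ξ₂||ξ₂+ξ₃||ξ₃+ξ₁|)^{1/2−3δ}) ≤ C, where ⟨x⟩ = 1+|x|. -/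
/-!
The pairwise sums `ξᵢ + ξⱼ` are nonzero integers, hence of absolute value at least `1`, so writing
one frequency as a pairwise sum plus another one gives bounds such as
`⟨ξ₂⟩ ≤ 2 |ξ₂ + ξ₃| ⟨ξ₃⟩`. After taking logarithms the claim is a linear inequality between the
logarithms of `⟨ξ⟩`, `⟨ξᵢ⟩` and `|ξᵢ + ξⱼ|`, which is a nonnegative combination of six such
bounds; the weights depend on where `γ` lies relative to `s` and `s + δ`.
-/

open Real

lemma one_le_jap (x : ℝ) : 1 ≤ jap x := le_add_of_nonneg_right (abs_nonneg x)

lemma jap_neg (x : ℝ) : jap (-x) = jap x := by rw [jap, jap, abs_neg]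

lemma jap_le_two_mul_abs_mul_jap {u v w : ℝ} (h : u = v + w) (hv : 1 ≤ |v|) :
    jap u ≤ 2 * |v| * jap w := by
  have : |u| ≤ |v| + |w| := h ▸ abs_add_le v w
  unfold jap
  nlinarith [abs_nonneg w]

lemma one_le_abs_intCast {n : ℤ} (hn : n ≠ 0) : (1 : ℝ) ≤ |(n : ℝ)| := by
  exact_mod_cast Int.one_le_abs hn

section LogInequality

variable {s δ γ c L L₁ L₂ L₃ P Q R : ℝ}

lemma log_ineq_of_add_le (hs : 0 ≤ s) (hδ : 0 < δ) (hδs : 10 * δ < 1 - 2 * s)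
    (hγ : γ < 1 - 10 * δ) (hsγ : s + δ ≤ γ) (hc : 0 ≤ c) (hL₁ : 0 ≤ L₁) (hL₃ : 0 ≤ L₃)
    (hP : 0 ≤ P) (hQ : 0 ≤ Q) (hR : 0 ≤ R)
    (h₂ : L₂ ≤ c + R + L) (h₅ : L ≤ c + Q + L₁) (h₆ : L ≤ c + P + L₃) :
    (s + δ) * L₂ + (γ - s) * L ≤
      4 * c + ((γ - s - δ) * L₁ + (1 - s - δ) * L₃ + (1 / 2 - 3 * δ) * (P + Q + R)) := by
  -- `θ` is the weight on `h₅`; any value above both arguments of the `max` and below the two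
  -- upper bounds `hθ₂`, `hθ₃` makes every coefficient of the combination nonnegative.
  set θ := max 0 (γ - 1 / 2 + 4 * δ)
  have hθ₀ : 0 ≤ θ := le_max_left _ _
  have hθ₁ : γ - 1 / 2 + 4 * δ ≤ θ := le_max_right _ _
  have hθ₂ : θ ≤ γ - s - δ := max_le (by linarith) (by linarith)
  have hθ₃ : θ ≤ 1 / 2 - 3 * δ := max_le (by linarith) (by linarith)
  have hL₂ : L₂ ≤ 2 * c + P + R + L₃ := by linarith
  linarith [mul_le_mul_of_nonneg_left hL₂ (by linarith : 0 ≤ s + δ),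
    mul_le_mul_of_nonneg_left h₅ hθ₀,
    mul_le_mul_of_nonneg_left h₆ (by linarith : 0 ≤ γ - s - θ),
    mul_nonneg (by linarith : 0 ≤ γ - s - δ - θ) hL₁,
    mul_nonneg (by linarith : 0 ≤ 1 - s - δ - (γ + δ - θ)) hL₃,
    mul_nonneg (by linarith : 0 ≤ 1 / 2 - 3 * δ - (γ + δ - θ)) hP,
    mul_nonneg (by linarith : 0 ≤ 1 / 2 - 3 * δ - θ) hQ,
    mul_nonneg (by linarith : 0 ≤ 1 / 2 - 3 * δ - (s + δ)) hR,
    mul_nonneg (by linarith : 0 ≤ 4 - (γ + s + 2 * δ)) hc]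

lemma log_ineq_of_le_of_lt_add (hs : 0 ≤ s) (hδ : 0 < δ) (hδs : 10 * δ < 1 - 2 * s)
    (hsγ : s ≤ γ) (hγs : γ < s + δ) (hc : 0 ≤ c) (hL₃ : 0 ≤ L₃)
    (hP : 0 ≤ P) (hQ : 0 ≤ Q) (hR : 0 ≤ R)
    (h₂ : L₂ ≤ c + R + L) (h₃ : L₁ ≤ c + R + L₃) (h₆ : L ≤ c + P + L₃) :
    (s + δ) * L₂ + (γ - s) * L ≤
      4 * c + ((γ - s - δ) * L₁ + (1 - s - δ) * L₃ + (1 / 2 - 3 * δ) * (P + Q + R)) := by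
  have hL₂ : L₂ ≤ 2 * c + P + R + L₃ := by linarith
  linarith [mul_le_mul_of_nonneg_left hL₂ (by linarith : 0 ≤ s + δ),
    mul_le_mul_of_nonneg_left h₆ (by linarith : 0 ≤ γ - s),
    mul_le_mul_of_nonneg_left h₃ (by linarith : 0 ≤ s + δ - γ),
    mul_nonneg (by linarith : 0 ≤ 1 - s - δ - (s + 2 * δ)) hL₃,
    mul_nonneg (by linarith : 0 ≤ 1 / 2 - 3 * δ - (γ + δ)) hP,
    mul_nonneg (by linarith : 0 ≤ 1 / 2 - 3 * δ) hQ,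
    mul_nonneg (by linarith : 0 ≤ 1 / 2 - 3 * δ - (2 * s + 2 * δ - γ)) hR,
    mul_nonneg (by linarith : 0 ≤ 4 - (2 * s + 3 * δ)) hc]

lemma log_ineq_of_lt (hδ : 0 < δ) (hδs : 10 * δ < 1 - 2 * s) (hγ₀ : 0 < γ)
    (hγs : γ < s) (hc : 0 ≤ c) (hL₃ : 0 ≤ L₃) (hP : 0 ≤ P) (hQ : 0 ≤ Q) (hR : 0 ≤ R)
    (h₁ : L₂ ≤ c + Q + L₃) (h₂ : L₂ ≤ c + R + L) (h₃ : L₁ ≤ c + R + L₃)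
    (h₄ : L₁ ≤ c + Q + L) :
    (s + δ) * L₂ + (γ - s) * L ≤
      4 * c + ((γ - s - δ) * L₁ + (1 - s - δ) * L₃ + (1 / 2 - 3 * δ) * (P + Q + R)) := by
  -- `(v - δ - γ) / 2` is the weight on `h₄`; `v` is chosen like `θ` above.
  set v := max (2 * s + 5 * δ - γ - 1 / 2) (δ + γ)
  have hv₁ : 2 * s + 5 * δ - γ - 1 / 2 ≤ v := le_max_left _ _
  have hv₂ : δ + γ ≤ v := le_max_right _ _
  have hv₃ : v ≤ 1 / 2 - 3 * δ := max_le (by linarith) (by linarith)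
  have hv₄ : v ≤ 2 * s + δ - γ := max_le (by linarith) (by linarith)
  linarith [mul_le_mul_of_nonneg_left h₁ (by linarith : 0 ≤ (δ + γ + v) / 2),
    mul_le_mul_of_nonneg_left h₂ (by linarith : 0 ≤ s + δ - (δ + γ + v) / 2),
    mul_le_mul_of_nonneg_left h₃ (by linarith : 0 ≤ s + δ - γ - (v - δ - γ) / 2),
    mul_le_mul_of_nonneg_left h₄ (by linarith : 0 ≤ (v - δ - γ) / 2),
    mul_nonneg (by linarith : 0 ≤ 1 - s - δ - (s + 2 * δ)) hL₃,
    mul_nonneg (by linarith : 0 ≤ 1 / 2 - 3 * δ) hP,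
    mul_nonneg (by linarith : 0 ≤ 1 / 2 - 3 * δ - v) hQ,
    mul_nonneg (by linarith : 0 ≤ 1 / 2 - 3 * δ - (2 * s + 2 * δ - γ - v)) hR,
    mul_nonneg (by linarith : 0 ≤ 4 - (2 * s + 2 * δ - γ)) hc]

lemma log_ineq (hs : 0 ≤ s) (hδ : 0 < δ) (hδs : 10 * δ < 1 - 2 * s) (hγ₀ : 0 < γ)
    (hγ : γ < 1 - 10 * δ) (hc : 0 ≤ c) (hL₁ : 0 ≤ L₁) (hL₃ : 0 ≤ L₃)
    (hP : 0 ≤ P) (hQ : 0 ≤ Q) (hR : 0 ≤ R)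
    (h₁ : L₂ ≤ c + Q + L₃) (h₂ : L₂ ≤ c + R + L) (h₃ : L₁ ≤ c + R + L₃)
    (h₄ : L₁ ≤ c + Q + L) (h₅ : L ≤ c + Q + L₁) (h₆ : L ≤ c + P + L₃) :
    (s + δ) * L₂ + (γ - s) * L ≤
      4 * c + ((γ - s - δ) * L₁ + (1 - s - δ) * L₃ + (1 / 2 - 3 * δ) * (P + Q + R)) := by
  rcases le_or_gt (s + δ) γ with hsγ | hγs
  · exact log_ineq_of_add_le hs hδ hδs hγ hsγ hc hL₁ hL₃ hP hQ hR h₂ h₅ h₆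
  rcases le_or_gt s γ with hsγ | hγs'
  · exact log_ineq_of_le_of_lt_add hs hδ hδs hsγ hγs hc hL₃ hP hQ hR h₂ h₃ h₆
  · exact log_ineq_of_lt hδ hδs hγ₀ hγs' hc hL₃ hP hQ hR h₁ h₂ h₃ h₄

end LogInequality

lemma log_le_log_two_add_log_add_log {x y z : ℝ} (hx : 0 < x) (hy : 0 < y) (hz : 0 < z)
    (h : x ≤ 2 * y * z) : log x ≤ log 2 + log y + log z := by
  rw [← log_mul two_ne_zero hy.ne', ← log_mul (by positivity) hz.ne']
  exact log_le_log hx h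

lemma rpow_ratio_le_sixteen {s δ γ a a₁ a₂ a₃ p q r : ℝ} (hs : 0 ≤ s) (hδ : 0 < δ)
    (hδs : 10 * δ < 1 - 2 * s) (hγ₀ : 0 < γ) (hγ : γ < 1 - 10 * δ)
    (ha : 1 ≤ a) (ha₁ : 1 ≤ a₁) (ha₂ : 1 ≤ a₂) (ha₃ : 1 ≤ a₃)
    (hp : 1 ≤ p) (hq : 1 ≤ q) (hr : 1 ≤ r)
    (h₁ : a₂ ≤ 2 * q * a₃) (h₂ : a₂ ≤ 2 * r * a) (h₃ : a₁ ≤ 2 * r * a₃)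
    (h₄ : a₁ ≤ 2 * q * a) (h₅ : a ≤ 2 * q * a₁) (h₆ : a ≤ 2 * p * a₃) :
    a₂ ^ (s + δ) * a ^ (γ - s) /
      (a₁ ^ (γ - s - δ) * a₃ ^ (1 - s - δ) * (p * q * r) ^ (1 / 2 - 3 * δ)) ≤ 16 := by
  have hpos : ∀ {x : ℝ}, 1 ≤ x → 0 < x := fun hx => one_pos.trans_le hx
  have key := log_ineq hs hδ hδs hγ₀ hγ (log_nonneg one_le_two)
    (log_nonneg ha₁) (log_nonneg ha₃) (log_nonneg hp) (log_nonneg hq) (log_nonneg hr)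
    (log_le_log_two_add_log_add_log (hpos ha₂) (hpos hq) (hpos ha₃) h₁)
    (log_le_log_two_add_log_add_log (hpos ha₂) (hpos hr) (hpos ha) h₂)
    (log_le_log_two_add_log_add_log (hpos ha₁) (hpos hr) (hpos ha₃) h₃)
    (log_le_log_two_add_log_add_log (hpos ha₁) (hpos hq) (hpos ha) h₄)
    (log_le_log_two_add_log_add_log (hpos ha) (hpos hq) (hpos ha₁) h₅)
    (log_le_log_two_add_log_add_log (hpos ha) (hpos hp) (hpos ha₃) h₆)
  have := hpos ha; have := hpos ha₁; have := hpos ha₂; have := hpos ha₃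
  have := hpos hp; have := hpos hq; have := hpos hr
  rw [div_le_iff₀ (by positivity), ← log_le_log_iff (by positivity) (by positivity)]
  simp (disch := positivity) only [log_mul, log_rpow]
  have h16 : log 16 = 4 * log 2 := by
    rw [show (16 : ℝ) = 2 ^ 4 by norm_num, log_pow, Nat.cast_ofNat]
  linarith

lemma multiplier_le_sixteen {s δ γ : ℝ} (hs : 0 ≤ s) (hδ : 0 < δ)
    (hδs : 10 * δ < 1 - 2 * s) (hγ₀ : 0 < γ) (hγ : γ < 1 - 10 * δ) {x₁ x₂ x₃ : ℝ}
    (hp : 1 ≤ |x₁ + x₂|) (hq : 1 ≤ |x₂ + x₃|) (hr : 1 ≤ |x₃ + x₁|) :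
    jap x₂ ^ (s + δ) * jap (x₁ + x₂ + x₃) ^ (γ - s) /
      (jap x₁ ^ (γ - s - δ) * jap x₃ ^ (1 - s - δ) *
        (|x₁ + x₂| * |x₂ + x₃| * |x₃ + x₁|) ^ (1 / 2 - 3 * δ)) ≤ 16 := by
  have hr' : 1 ≤ |-(x₃ + x₁)| := by rwa [abs_neg]
  have hq' : 1 ≤ |-(x₂ + x₃)| := by rwa [abs_neg]
  refine rpow_ratio_le_sixteen hs hδ hδs hγ₀ hγ (one_le_jap _) (one_le_jap _) (one_le_jap _)
    (one_le_jap _) hp hq hr ?_ ?_ ?_ ?_ ?_ ?_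
  · simpa only [jap_neg] using jap_le_two_mul_abs_mul_jap (u := x₂) (w := -x₃) (by ring) hq
  · simpa only [abs_neg] using
      jap_le_two_mul_abs_mul_jap (u := x₂) (w := x₁ + x₂ + x₃) (by ring) hr'
  · simpa only [jap_neg] using jap_le_two_mul_abs_mul_jap (u := x₁) (w := -x₃) (by ring) hr
  · simpa only [abs_neg] using
      jap_le_two_mul_abs_mul_jap (u := x₁) (w := x₁ + x₂ + x₃) (by ring) hq'
  · exact jap_le_two_mul_abs_mul_jap (by ring) hq
  · exact jap_le_two_mul_abs_mul_jap (by ring) hp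

theorem nonresonant_multiplier_bound_general
    (s δ γ : ℝ) (hs0 : 0 ≤ s) (hδ : 0 < δ)
    (hδs : 10 * δ < 1 - 2 * s) (hγ0 : 0 < γ) (hγ : γ < 1 - 10 * δ) :
    ∃ C : ℝ, ∀ ξ ξ₁ ξ₂ ξ₃ : ℤ, ξ ≠ 0 → ξ₁ ≠ 0 → ξ₂ ≠ 0 → ξ₃ ≠ 0 →
      ξ₁ + ξ₂ + ξ₃ = ξ → (ξ₁ + ξ₂) * (ξ₂ + ξ₃) * (ξ₃ + ξ₁) ≠ 0 →
      jap (ξ₂ : ℝ) ^ (s + δ) * jap (ξ : ℝ) ^ (γ - s) /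
        (jap (ξ₁ : ℝ) ^ (γ - s - δ) * jap (ξ₃ : ℝ) ^ (1 - s - δ) *
          (|(ξ₁ : ℝ) + ξ₂| * |(ξ₂ : ℝ) + ξ₃| * |(ξ₃ : ℝ) + ξ₁|) ^ (1 / 2 - 3 * δ)) ≤ C := by
  refine ⟨16, fun ξ ξ₁ ξ₂ ξ₃ _ _ _ _ hsum hres => ?_⟩
  obtain ⟨⟨hp, hq⟩, hr⟩ : ((ξ₁ + ξ₂ ≠ 0 ∧ ξ₂ + ξ₃ ≠ 0) ∧ ξ₃ + ξ₁ ≠ 0) := by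
    simpa only [mul_ne_zero_iff] using hres
  subst hsum
  push_cast
  exact multiplier_le_sixteen hs0 hδ hδs hγ0 hγ (mod_cast one_le_abs_intCast hp)
    (mod_cast one_le_abs_intCast hq) (mod_cast one_le_abs_intCast hr)

theorem nonresonant_multiplier_bound
    (s δ γ : ℝ) (hs0 : 0 ≤ s) (hs : s < 1 / 2) (hδ : 0 < δ)
    (hδs : 10 * δ < 1 - 2 * s) (hγ0 : 0 < γ) (hγ : γ < 1 - 10 * δ) :
    ∃ C : ℝ, ∀ ξ ξ₁ ξ₂ ξ₃ : ℤ, ξ ≠ 0 → ξ₁ ≠ 0 → ξ₂ ≠ 0 → ξ₃ ≠ 0 →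
      ξ₁ + ξ₂ + ξ₃ = ξ → (ξ₁ + ξ₂) * (ξ₂ + ξ₃) * (ξ₃ + ξ₁) ≠ 0 →
      jap (ξ₂ : ℝ) ^ (s + δ) * jap (ξ : ℝ) ^ (γ - s) /
        (jap (ξ₁ : ℝ) ^ (γ - s - δ) * jap (ξ₃ : ℝ) ^ (1 - s - δ) *
          (|(ξ₁ : ℝ) + ξ₂| * |(ξ₂ : ℝ) + ξ₃| * |(ξ₃ : ℝ) + ξ₁|) ^ (1 / 2 - 3 * δ)) ≤ C :=
  nonresonant_multiplier_bound_general s δ γ hs0 hδ hδs hγ0 hγ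
end
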